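/- Let G be a linearly ordered abelian group (written additively), let u ∈ G with u ≥ 0, let n be a natural number, and let x ∈ G with 0 ≤ x ≤ n • u. Then there exist elements x₁, …, xₙ ∈ G with 0 ≤ xᵢ ≤ u for every i and x = x₁ + ⋯ + xₙ. -/

import Mathlib

/-! Greedy decomposition: peel off `min x u`, which lies in `[0, u]` and leaves a remainder in
`[0, n • u]` when `x ∈ [0, (n + 1) • u]`, and recurse. -/

section

variable {G : Type*} [AddCommGroup G] [LinearOrder G] [IsOrderedAddMonoid G] {u x : G}

lemma sub_min_le_nsmul {n : ℕ} (hu : 0 ≤ u) (hxn : x ≤ (n + 1) • u) : x - min x u ≤ n • u := by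
  rcases le_total x u with h | h
  · simpa [min_eq_left h] using nsmul_nonneg hu n
  · rw [min_eq_right h, sub_le_iff_le_add, ← succ_nsmul]
    exact hxn

lemma exists_fin_sum_eq_of_mem_Icc_nsmul (hu : 0 ≤ u) :
    ∀ (n : ℕ) (x : G), x ∈ Set.Icc 0 (n • u) →
      ∃ f : Fin n → G, (∀ i, f i ∈ Set.Icc 0 u) ∧ ∑ i, f i = x
  | 0, x, hx => ⟨Fin.elim0, fun i => i.elim0, by simpa using le_antisymm hx.1 (by simpa using hx.2)⟩
  | n + 1, x, hx => by
    obtain ⟨f, hf, hsum⟩ := exists_fin_sum_eq_of_mem_Icc_nsmul hu n (x - min x u)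
      ⟨sub_nonneg.2 (min_le_left x u), sub_min_le_nsmul hu hx.2⟩
    refine ⟨Fin.cons (min x u) f, Fin.cases ⟨le_min hx.1 hu, min_le_right x u⟩ hf, ?_⟩
    rw [Fin.sum_cons, hsum, add_sub_cancel]

end

/-- Let `G` be a linearly ordered abelian group, `u ≥ 0`, `n : ℕ`, and `x ∈ G` with
`0 ≤ x ≤ n • u`. Then there exist `x₁, …, xₙ ∈ G` with `0 ≤ xᵢ ≤ u` for every `i`
and `x = x₁ + ⋯ + xₙ`. -/
theorem stmt_5 (G : Type*) [AddCommGroup G] [LinearOrder G] [IsOrderedAddMonoid G] (u : G) (hu : 0 ≤ u)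
    (n : ℕ) (x : G) (hx0 : 0 ≤ x) (hxn : x ≤ n • u) :
    ∃ f : Fin n → G, (∀ i, 0 ≤ f i ∧ f i ≤ u) ∧ x = ∑ i, f i := by
  obtain ⟨f, hf, hsum⟩ := exists_fin_sum_eq_of_mem_Icc_nsmul hu n x ⟨hx0, hxn⟩
  exact ⟨f, hf, hsum.symm⟩
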